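/- arXiv:1706.03793 — 4 statements merged into one kernel-verified Lean document; each statement's English description precedes it below -/
import Mathlib

section
/- Fix an integer n > 1 and initial amplitudes ψ : ℤ_n → ℂ. Let E be a set of t_E-paths (a time-finite event with defining data (t_E, E)) and F a set of t_F-paths, and for t ≥ max(t_E, t_F) define D_t(E,F) = Σ_{γ ∈ E_t} Σ_{γ' ∈ F_t} a[γ]·conj(a[γ'])·δ_{γ(t), γ'(t)}, where δ is the Kronecker delta on the final sites. Then D_t(E,F) = D_{t+1}(E,F) for every t ≥ max(t_E, t_F); consequently D_t(E,F) is independent of t ≥ max(t_E, t_F). -/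
open scoped Classical

/-- `efn x = exp(2πi x)`. -/
noncomputable def efn (x : ℝ) : ℂ := Complex.exp (2 * Real.pi * Complex.I * x)

/-- `ω_n`: a (2n)-th root of unity for even `n`, an n-th root of unity for odd `n`. -/
noncomputable def omegaN (n : ℕ) : ℂ :=
  if Even n then efn (1 / (2 * n)) else efn (1 / n)

/-- `n' = 2n` for even `n`, `n' = n` for odd `n`. -/
def nPrime (n : ℕ) : ℕ := if Even n then 2 * n else n

/-- The `n`-site hopper transfer matrix `U(n)_{jk} = ω_n^{(j-k)^2}/√n`,
with `(j-k)^2` computed from the integer representatives in `{0,…,n-1}`. -/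
noncomputable def hopperU (n : ℕ) [NeZero n] : Matrix (ZMod n) (ZMod n) ℂ :=
  fun j k => omegaN n ^ (((j.val : ℤ) - (k.val : ℤ)).natAbs ^ 2) / (Real.sqrt n : ℂ)

/-- The amplitude `a[γ] = ψ_{γ(0)} ∏_{t'=0}^{t-1} U(n)_{γ(t') γ(t'+1)}` of a `t`-path. -/
noncomputable def amp (n : ℕ) [NeZero n] (ψ : ZMod n → ℂ) (t : ℕ)
    (γ : Fin (t + 1) → ZMod n) : ℂ :=
  ψ (γ 0) * ∏ k : Fin t, hopperU n (γ k.castSucc) (γ k.succ)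

/-- The (un-reduced) phase exponent `Σ_{t'=0}^{t-1} (γ(t') - γ(t'+1))²` of a `t`-path,
differences computed via the integer representatives. -/
def phaseSum (n : ℕ) [NeZero n] (t : ℕ) (γ : Fin (t + 1) → ZMod n) : ℤ :=
  ∑ k : Fin t, (((γ k.castSucc).val : ℤ) - ((γ k.succ).val : ℤ)) ^ 2

/-- Restriction of a `t`-path to a `t₀`-path (`t₀ ≤ t`). -/
def restrictPath (n : ℕ) {t₀ t : ℕ} (h : t₀ ≤ t) (γ : Fin (t + 1) → ZMod n) :
    Fin (t₀ + 1) → ZMod n :=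
  fun k => γ (Fin.castLE (Nat.succ_le_succ h) k)

/-- `s^t_{ifp}(E)`: the number of `t`-paths in `E_t` starting at `i`, ending at `f`,
with phase exponent `p` (mod `n'`). -/
noncomputable def sCount (n : ℕ) [NeZero n] {t₀ : ℕ} (t : ℕ) (h : t₀ ≤ t)
    (E : Set (Fin (t₀ + 1) → ZMod n)) (i f : ZMod n) (p : ℕ) : ℕ :=
  Set.ncard {γ : Fin (t + 1) → ZMod n |
    restrictPath n h γ ∈ E ∧ γ 0 = i ∧ γ (Fin.last t) = f ∧
    phaseSum n t γ % (nPrime n : ℤ) = (p : ℤ)}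

/-- The quantum measure at time `t` of a set `F` of `t`-paths:
`μ_t(F) = Σ_f |Σ_{γ ∈ F, γ(t)=f} a[γ]|²`. -/
noncomputable def mu (n : ℕ) [NeZero n] (ψ : ZMod n → ℂ) (t : ℕ)
    (F : Set (Fin (t + 1) → ZMod n)) : ℝ :=
  ∑ f : ZMod n, (‖∑ γ : Fin (t + 1) → ZMod n,
    if γ ∈ F ∧ γ (Fin.last t) = f then amp n ψ t γ else 0‖) ^ 2

/-- The decoherence functional evaluated at time `t ≥ max(t_E, t_F)`:
`D_t(E,F) = Σ_{γ ∈ E_t} Σ_{γ' ∈ F_t} a[γ]·conj(a[γ'])·δ_{γ(t),γ'(t)}`. -/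
noncomputable def Dfun (n : ℕ) [NeZero n] (ψ : ZMod n → ℂ) {tE tF : ℕ}
    (E : Set (Fin (tE + 1) → ZMod n)) (F : Set (Fin (tF + 1) → ZMod n))
    (t : ℕ) (hE : tE ≤ t) (hF : tF ≤ t) : ℂ :=
  ∑ γ : Fin (t + 1) → ZMod n, ∑ γ' : Fin (t + 1) → ZMod n,
    if restrictPath n hE γ ∈ E ∧ restrictPath n hF γ' ∈ F ∧
        γ (Fin.last t) = γ' (Fin.last t) then
      amp n ψ t γ * (starRingEnd ℂ) (amp n ψ t γ')
    else 0

/-!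
Write `A_t^E(x)` for the total amplitude of the paths of `E_t` ending at site `x`. Then
`D_t(E,F) = Σ_x A_t^E(x) · conj(A_t^F(x))`, and appending one more step to the paths gives
`A_{t+1}^E = A_t^E · U(n)`. The transfer matrix is unitary because `ω_n²` is a primitive `n`-th root
of unity, so its rows are orthonormal by a character-sum computation; hence the inner product
of the two amplitude vectors does not change from `t` to `t + 1`.
-/

open scoped Matrix ComplexConjugate

lemma norm_omegaN (n : ℕ) : ‖omegaN n‖ = 1 := by
  unfold omegaN efn
  split_ifs <;> rw [Complex.norm_exp] <;> simp

lemma isPrimitiveRoot_omegaN_sq (n : ℕ) [NeZero n] : IsPrimitiveRoot (omegaN n ^ 2) n := by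
  have hn : n ≠ 0 := NeZero.ne n
  unfold omegaN efn
  split_ifs with h
  · rw [← Complex.exp_nat_mul]
    convert Complex.isPrimitiveRoot_exp n hn using 2
    push_cast
    field_simp
  · rw [← Complex.exp_nat_mul]
    convert Complex.isPrimitiveRoot_exp_of_coprime 2 n hn
      (Nat.coprime_two_left.mpr (Nat.not_even_iff_odd.mp h)) using 2
    push_cast
    field_simp

lemma ZMod.sum_pow_val_eq_zero {R : Type*} [CommRing R] [IsDomain R] {n : ℕ} [NeZero n] {x : R}
    (hxn : x ^ n = 1) (hx : x ≠ 1) : ∑ a : ZMod n, x ^ a.val = 0 := by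
  refine AddChar.sum_eq_zero_of_ne_one (ψ := AddChar.zmodChar n hxn) fun h => hx ?_
  have h1 := DFunLike.congr_fun h ((1 : ℕ) : ZMod n)
  rwa [AddChar.zmodChar_apply', pow_one, AddChar.one_apply] at h1

lemma sum_zpow_sq_mul_conj {n : ℕ} [NeZero n] {ω : ℂ} (hω : ‖ω‖ = 1)
    (hζ : IsPrimitiveRoot (ω ^ 2) n) (j k : ZMod n) :
    ∑ f : ZMod n, ω ^ (((j.val : ℤ) - f.val) ^ 2) * conj (ω ^ (((k.val : ℤ) - f.val) ^ 2)) =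
      if j = k then (n : ℂ) else 0 := by
  have hω0 : ω ≠ 0 := norm_ne_zero_iff.mp (by rw [hω]; exact one_ne_zero)
  set x := (ω ^ 2) ^ ((k.val : ℤ) - j.val) with hx_def
  -- `(j - f)² - (k - f)² = j² - k² + 2(k - j)f`: up to a constant phase, a character sum for `ω²`
  have hterm (f : ZMod n) :
      ω ^ (((j.val : ℤ) - f.val) ^ 2) * conj (ω ^ (((k.val : ℤ) - f.val) ^ 2)) =
        ω ^ ((j.val : ℤ) ^ 2 - (k.val : ℤ) ^ 2) * x ^ f.val := by
    rw [map_zpow₀, ← Complex.inv_eq_conj hω, inv_zpow', ← zpow_add₀ hω0, hx_def, ← zpow_natCast,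
      ← zpow_natCast ω 2, ← zpow_mul, ← zpow_mul, ← zpow_add₀ hω0]
    congr 1
    ring
  rw [Finset.sum_congr rfl fun f _ => hterm f, ← Finset.mul_sum]
  split_ifs with hjk
  · subst hjk
    simp [x]
  · have hxn : x ^ n = 1 := by
      rw [← zpow_natCast, ← zpow_mul, mul_comm, zpow_mul, zpow_natCast, hζ.pow_eq_one, one_zpow]
    have hx : x ≠ 1 := by
      rw [hx_def, Ne, hζ.zpow_eq_one_iff_dvd, ← ZMod.intCast_zmod_eq_zero_iff_dvd]
      push_cast
      simpa [sub_eq_zero] using Ne.symm hjk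
    rw [ZMod.sum_pow_val_eq_zero hxn hx, mul_zero]

lemma hopperU_apply (n : ℕ) [NeZero n] (j k : ZMod n) :
    hopperU n j k = omegaN n ^ (((j.val : ℤ) - k.val) ^ 2) / (Real.sqrt n : ℂ) := by
  rw [hopperU, ← zpow_natCast]
  push_cast [Int.natCast_natAbs, sq_abs]
  rfl

lemma hopperU_mem_unitaryGroup (n : ℕ) [NeZero n] : hopperU n ∈ Matrix.unitaryGroup (ZMod n) ℂ := by
  rw [Matrix.mem_unitaryGroup_iff]
  ext j k
  have hterm (f : ZMod n) : hopperU n j f * star (hopperU n k f) =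
      omegaN n ^ (((j.val : ℤ) - f.val) ^ 2) * conj (omegaN n ^ (((k.val : ℤ) - f.val) ^ 2)) / n := by
    rw [hopperU_apply, hopperU_apply, star_div₀, Complex.star_def, Complex.conj_ofReal,
      div_mul_div_comm, ← Complex.ofReal_mul, Real.mul_self_sqrt (Nat.cast_nonneg _)]
    push_cast
    rfl
  simp only [Matrix.mul_apply, Matrix.star_apply, hterm, ← Finset.sum_div,
    sum_zpow_sq_mul_conj (norm_omegaN n) (isPrimitiveRoot_omegaN_sq n), Matrix.one_apply]
  split_ifs <;> simp [NeZero.ne]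

theorem Matrix.vecMul_dotProduct_star_vecMul {ι R : Type*} [Fintype ι] [DecidableEq ι]
    [CommRing R] [StarRing R] {U : Matrix ι ι R} (hU : U ∈ Matrix.unitaryGroup ι R)
    (v w : ι → R) : (v ᵥ* U) ⬝ᵥ star (w ᵥ* U) = v ⬝ᵥ star w := by
  rw [Matrix.star_vecMul, ← Matrix.dotProduct_mulVec, Matrix.mulVec_mulVec,
    ← Matrix.star_eq_conjTranspose, Matrix.mem_unitaryGroup_iff.mp hU, Matrix.one_mulVec]

lemma Fin.sum_pi_eq_sum_sum_snoc {α M : Type*} [Fintype α] [AddCommMonoid M] {t : ℕ}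
    (g : (Fin (t + 1) → α) → M) :
    ∑ γ, g γ = ∑ δ : Fin t → α, ∑ x, g (Fin.snoc δ x) := by
  rw [← (Fin.snocEquiv fun _ => α).sum_comp, Fintype.sum_prod_type, Finset.sum_comm]
  rfl

lemma amp_snoc (n : ℕ) [NeZero n] (ψ : ZMod n → ℂ) (t : ℕ) (γ : Fin (t + 1) → ZMod n)
    (x : ZMod n) :
    amp n ψ (t + 1) (Fin.snoc γ x) = amp n ψ t γ * hopperU n (γ (Fin.last t)) x := by
  rw [amp, amp, Fin.prod_univ_castSucc]
  simp only [← Fin.castSucc_succ, Fin.snoc_castSucc, Fin.succ_last, Fin.snoc_last, mul_assoc]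
  rfl

lemma restrictPath_snoc (n : ℕ) {t₀ t : ℕ} (h : t₀ ≤ t) (γ : Fin (t + 1) → ZMod n)
    (x : ZMod n) :
    restrictPath n (h.trans t.le_succ) (Fin.snoc γ x) = restrictPath n h γ := by
  funext k
  have : Fin.castLE (Nat.succ_le_succ (h.trans t.le_succ)) k =
      (Fin.castLE (Nat.succ_le_succ h) k).castSucc := rfl
  rw [restrictPath, this, Fin.snoc_castSucc, restrictPath]

noncomputable def eventAmp (n : ℕ) [NeZero n] (ψ : ZMod n → ℂ) {t₀ : ℕ}
    (E : Set (Fin (t₀ + 1) → ZMod n)) (t : ℕ) (h : t₀ ≤ t) : ZMod n → ℂ :=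
  fun x => ∑ γ : Fin (t + 1) → ZMod n,
    if restrictPath n h γ ∈ E ∧ γ (Fin.last t) = x then amp n ψ t γ else 0

lemma Dfun_eq_dotProduct (n : ℕ) [NeZero n] (ψ : ZMod n → ℂ) {tE tF : ℕ}
    (E : Set (Fin (tE + 1) → ZMod n)) (F : Set (Fin (tF + 1) → ZMod n))
    (t : ℕ) (hE : tE ≤ t) (hF : tF ≤ t) :
    Dfun n ψ E F t hE hF = eventAmp n ψ E t hE ⬝ᵥ star (eventAmp n ψ F t hF) := by
  simp only [Dfun, dotProduct, eventAmp, Pi.star_apply, star_sum, Finset.sum_mul_sum]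
  conv_rhs => rw [Finset.sum_comm]
  refine Finset.sum_congr rfl fun γ _ => ?_
  conv_rhs => rw [Finset.sum_comm]
  refine Finset.sum_congr rfl fun γ' _ => ?_
  by_cases hγ : restrictPath n hE γ ∈ E <;> by_cases hγ' : restrictPath n hF γ' ∈ F <;>
    simp [hγ, hγ', eq_comm, apply_ite (starRingEnd ℂ)]

lemma eventAmp_succ (n : ℕ) [NeZero n] (ψ : ZMod n → ℂ) {t₀ : ℕ}
    (E : Set (Fin (t₀ + 1) → ZMod n)) (t : ℕ) (h : t₀ ≤ t) :
    eventAmp n ψ E (t + 1) (h.trans t.le_succ) = eventAmp n ψ E t h ᵥ* hopperU n := by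
  funext x
  simp only [eventAmp, Matrix.vecMul, dotProduct, Finset.sum_mul]
  rw [Fin.sum_pi_eq_sum_sum_snoc]
  conv_rhs => rw [Finset.sum_comm]
  refine Finset.sum_congr rfl fun γ _ => ?_
  simp_rw [restrictPath_snoc n h γ, amp_snoc]
  by_cases hγ : restrictPath n h γ ∈ E <;> simp [hγ]

lemma Dfun_succ (n : ℕ) [NeZero n] (ψ : ZMod n → ℂ) {tE tF : ℕ}
    (E : Set (Fin (tE + 1) → ZMod n)) (F : Set (Fin (tF + 1) → ZMod n))
    (t : ℕ) (hE : tE ≤ t) (hF : tF ≤ t) :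
    Dfun n ψ E F (t + 1) (hE.trans t.le_succ) (hF.trans t.le_succ) = Dfun n ψ E F t hE hF := by
  rw [Dfun_eq_dotProduct, Dfun_eq_dotProduct, eventAmp_succ, eventAmp_succ,
    Matrix.vecMul_dotProduct_star_vecMul (hopperU_mem_unitaryGroup n)]

lemma Dfun_eq_of_le (n : ℕ) [NeZero n] (ψ : ZMod n → ℂ) {tE tF : ℕ}
    (E : Set (Fin (tE + 1) → ZMod n)) (F : Set (Fin (tF + 1) → ZMod n))
    {m t : ℕ} (hm : m ≤ t) (hE : tE ≤ m) (hF : tF ≤ m) :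
    Dfun n ψ E F t (hE.trans hm) (hF.trans hm) = Dfun n ψ E F m hE hF := by
  induction t, hm using Nat.le_induction with
  | base => rfl
  | succ t hmt ih => exact (Dfun_succ n ψ E F t _ _).trans ih

theorem stmt1_general (n : ℕ) [NeZero n] (ψ : ZMod n → ℂ)
    {tE tF : ℕ} (E : Set (Fin (tE + 1) → ZMod n)) (F : Set (Fin (tF + 1) → ZMod n)) :
    (∀ (t : ℕ) (hE : tE ≤ t) (hF : tF ≤ t),
      Dfun n ψ E F t hE hF =
        Dfun n ψ E F (t + 1) (le_trans hE (Nat.le_succ t)) (le_trans hF (Nat.le_succ t))) ∧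
    (∀ (t t' : ℕ) (hE : tE ≤ t) (hF : tF ≤ t) (hE' : tE ≤ t') (hF' : tF ≤ t'),
      Dfun n ψ E F t hE hF = Dfun n ψ E F t' hE' hF') := by
  refine ⟨fun t hE hF => (Dfun_succ n ψ E F t hE hF).symm, fun t t' hE hF hE' hF' => ?_⟩
  exact (Dfun_eq_of_le n ψ E F (max_le hE hF) (le_max_left _ _) (le_max_right _ _)).trans
    (Dfun_eq_of_le n ψ E F (max_le hE' hF') (le_max_left _ _) (le_max_right _ _)).symm

/-- For `t ≥ max(t_E,t_F)`, `D_t(E,F) = D_{t+1}(E,F)`; consequently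
`D_t(E,F)` is independent of `t ≥ max(t_E,t_F)`. -/
theorem stmt1 (n : ℕ) [NeZero n] (hn : 1 < n) (ψ : ZMod n → ℂ)
    {tE tF : ℕ} (E : Set (Fin (tE + 1) → ZMod n)) (F : Set (Fin (tF + 1) → ZMod n)) :
    (∀ (t : ℕ) (hE : tE ≤ t) (hF : tF ≤ t),
      Dfun n ψ E F t hE hF =
        Dfun n ψ E F (t + 1) (le_trans hE (Nat.le_succ t)) (le_trans hF (Nat.le_succ t))) ∧
    (∀ (t t' : ℕ) (hE : tE ≤ t) (hF : tF ≤ t) (hE' : tE ≤ t') (hF' : tF ≤ t'),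
      Dfun n ψ E F t hE hF = Dfun n ψ E F t' hE' hF') :=
  stmt1_general n ψ E F
end

section
/- Fix an integer n > 1 and let E be a set of t₀-paths (a time-finite event with defining data (t₀, E)). For every t ≥ t₀ + 2n − 1, every i, f ∈ ℤ_n and every p ∈ ℤ_{n,i,f}, the count s^t_{ifp}(E) satisfies s^t_{ifp}(E) ≥ c_i(E) · n^{t − t₀ − 2n + 1}, where c_i(E) is the number of t₀-paths in E that start at site i. -/
open scoped Classical

/-- The set of residues `ℤ_{n,i,f}`: all of `{0,…,n-1}` for odd `n`; for even `n`, the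
residues in `{0,…,2n-1}` whose parity is that of `i - f` (parity via the integer
representatives, so the parity of `i.val + f.val`). -/
def Znif (n : ℕ) [NeZero n] (i f : ZMod n) : Set ℕ :=
  if Even n then {p | p < 2 * n ∧ p % 2 = (i.val + f.val) % 2}
  else {p | p < n}


/-!
Modulo `n'`, the phase of a single step depends only on the difference of its endpoints in
`ℤ_n`: if `u ≡ v (mod n)` then `u² ≡ v² (mod n')`. Hence a step `+1` or `-1` adds `1` to the
phase, a step `+2` adds `4` and a step `0` adds nothing. Counting such steps shows that from any
site `a`, within exactly `2n - 1` steps, one reaches any site `f` with any prescribed phase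
increment of the parity forced by `a` and `f` (for odd `n` there is no parity constraint).
So every `t₀`-path of `E` starting at `i`, followed by `t - t₀ - 2n + 1` arbitrary sites, extends
to a path counted by `s^t_{ifp}(E)`; reading the prefix and the free sites back off a counted path
is therefore surjective onto these `c_i(E) · n^(t - t₀ - 2n + 1)` choices.
-/

open Finset

-- Paths are indexed by `ℕ` here so that they can be extended step by step; `phaseUpTo γ s` only
-- reads the values of `γ` on `{0, …, s}`.
def phaseUpTo {n : ℕ} (γ : ℕ → ZMod n) (s : ℕ) : ℤ :=
  ∑ k ∈ range s, (((γ k).val : ℤ) - (γ (k + 1)).val) ^ 2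

section Phase

variable {n : ℕ}

theorem phaseSum_eq_phaseUpTo [NeZero n] (γ : ℕ → ZMod n) (t : ℕ) :
    phaseSum n t (fun j => γ j) = phaseUpTo γ t :=
  Fin.sum_univ_eq_sum_range (fun k => (((γ k).val : ℤ) - (γ (k + 1)).val) ^ 2) t

theorem phaseUpTo_congr {γ γ' : ℕ → ZMod n} {s : ℕ} (h : Set.EqOn γ γ' (Set.Iic s)) :
    phaseUpTo γ s = phaseUpTo γ' s := by
  refine sum_congr rfl fun k hk => ?_
  have hk : k < s := mem_range.mp hk
  rw [h (Set.mem_Iic.mpr hk.le), h (Set.mem_Iic.mpr hk)]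

theorem sub_sq_modEq_add (x y : ℤ) : (x - y) ^ 2 ≡ x + y [ZMOD 2] := by
  refine (ZMod.intCast_eq_intCast_iff _ _ 2).mp ?_
  push_cast
  generalize (x : ZMod 2) = a
  generalize (y : ZMod 2) = b
  revert a b
  decide

theorem phaseUpTo_modEq_two (γ : ℕ → ZMod n) (s : ℕ) :
    phaseUpTo γ s ≡ (γ 0).val + (γ s).val [ZMOD 2] := by
  induction s with
  | zero => simp [phaseUpTo, Int.ModEq, ← two_mul]
  | succ s ih =>
    rw [phaseUpTo, sum_range_succ, ← phaseUpTo]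
    calc _ ≡ ((γ 0).val + (γ s).val) + ((γ s).val + (γ (s + 1)).val) [ZMOD 2] :=
          ih.add (sub_sq_modEq_add _ _)
      _ ≡ (γ 0).val + (γ (s + 1)).val [ZMOD 2] := by
          rw [Int.modEq_iff_add_fac]; exact ⟨-(γ s).val, by ring⟩

theorem nPrime_of_even (h : Even n) : nPrime n = 2 * n := if_pos h

theorem nPrime_of_odd (h : Odd n) : nPrime n = n := if_neg (Nat.not_even_iff_odd.mpr h)

theorem sq_modEq_nPrime_of_modEq {u v : ℤ} (h : u ≡ v [ZMOD n]) :
    u ^ 2 ≡ v ^ 2 [ZMOD nPrime n] := by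
  obtain ⟨k, rfl⟩ := Int.modEq_iff_add_fac.mp h
  rw [Int.modEq_iff_dvd]
  rcases Nat.even_or_odd n with ⟨m, rfl⟩ | hn
  · rw [nPrime_of_even ⟨m, rfl⟩]
    exact ⟨k * (u + m * k), by push_cast; ring⟩
  · rw [nPrime_of_odd hn]
    exact ⟨k * (2 * u + n * k), by ring⟩

end Phase

section Extension

variable {n : ℕ} [NeZero n]

theorem exists_extension_step (γ : ℕ → ZMod n) (s : ℕ) (z : ℤ) :
    ∃ γ' : ℕ → ZMod n, Set.EqOn γ' γ (Set.Iic s) ∧ γ' (s + 1) = γ s - z ∧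
      phaseUpTo γ' (s + 1) ≡ phaseUpTo γ s + z ^ 2 [ZMOD nPrime n] := by
  have hagree : Set.EqOn (Function.update γ (s + 1) (γ s - z)) γ (Set.Iic s) :=
    fun k hk => Function.update_of_ne (by simp at hk; omega) _ _
  refine ⟨_, hagree, by simp, ?_⟩
  rw [phaseUpTo, sum_range_succ, ← phaseUpTo, phaseUpTo_congr hagree, hagree Set.self_mem_Iic,
    Function.update_self]
  refine Int.ModEq.add_left _ (sq_modEq_nPrime_of_modEq ?_)
  rw [← ZMod.intCast_eq_intCast_iff]
  simp

theorem exists_extension_steps (zs : List ℤ) (γ : ℕ → ZMod n) (s : ℕ) :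
    ∃ γ' : ℕ → ZMod n, Set.EqOn γ' γ (Set.Iic s) ∧ γ' (s + zs.length) = γ s - zs.sum ∧
      phaseUpTo γ' (s + zs.length) ≡ phaseUpTo γ s + (zs.map (· ^ 2)).sum
        [ZMOD nPrime n] := by
  induction zs generalizing γ s with
  | nil => exact ⟨γ, fun _ _ => rfl, by simp, by simp [Int.ModEq.refl]⟩
  | cons z zs ih =>
    obtain ⟨γ₁, hγ₁, hend₁, hphase₁⟩ := exists_extension_step γ s z
    obtain ⟨γ₂, hγ₂, hend₂, hphase₂⟩ := ih γ₁ (s + 1)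
    have hlen : s + (z :: zs).length = s + 1 + zs.length := by simp; omega
    refine ⟨γ₂, fun k hk => (hγ₂ (Set.Iic_subset_Iic.mpr s.le_succ hk)).trans (hγ₁ hk),
      ?_, ?_⟩
    · rw [hlen, hend₂, hend₁]
      push_cast [List.sum_cons]
      ring
    · rw [hlen]
      calc _ ≡ phaseUpTo γ₁ (s + 1) + (zs.map (· ^ 2)).sum [ZMOD nPrime n] := hphase₂
        _ ≡ phaseUpTo γ s + z ^ 2 + (zs.map (· ^ 2)).sum [ZMOD nPrime n] := hphase₁.add_right _
        _ = _ := by simp [add_assoc]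

end Extension

section StepCounts

variable {n m : ℕ}

theorem exists_step_counts_of_odd (hn : Odd n) (hm : m < n) {r : ℕ} (hr : r < n) :
    ∃ j l : ℕ, j + l ≤ 2 * n - 1 ∧ (j - l : ℤ) ≡ m [ZMOD n] ∧ (j + l : ℤ) ≡ r [ZMOD n] := by
  have hn2 : n % 2 = 1 := Nat.odd_iff.mp hn
  by_cases hpar : (r + n + m) % 2 = 0
  · refine ⟨(r + n + m) / 2, (r + n - m) / 2, by omega, Int.modEq_iff_add_fac.mpr ⟨0, by omega⟩,
      Int.modEq_iff_add_fac.mpr ⟨-1, by omega⟩⟩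
  · refine ⟨(r + m) / 2, (r + 2 * n - m) / 2, by omega, Int.modEq_iff_add_fac.mpr ⟨1, by omega⟩,
      Int.modEq_iff_add_fac.mpr ⟨-1, by omega⟩⟩

theorem exists_step_counts_of_even (hn : Even n) (hm : m < n) {r : ℕ} (hr : r < 2 * n)
    (hpar : r % 2 = m % 2) :
    ∃ j l c : ℕ, j + l + c ≤ 2 * n - 1 ∧ (j - l + 2 * c : ℤ) ≡ m [ZMOD n] ∧
      (j + l + 4 * c : ℤ) ≡ r [ZMOD 2 * n] := by
  have hn2 : n % 2 = 0 := Nat.even_iff.mp hn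
  by_cases hrm : m ≤ r
  · exact ⟨(r + m) / 2, (r - m) / 2, 0, by omega, Int.modEq_iff_add_fac.mpr ⟨0, by omega⟩,
      Int.modEq_iff_add_fac.mpr ⟨0, by omega⟩⟩
  by_cases hrn : n ≤ r + m
  · exact ⟨(r + m - n) / 2, (r + n - m) / 2, 0, by omega,
      Int.modEq_iff_add_fac.mpr ⟨1, by omega⟩, Int.modEq_iff_add_fac.mpr ⟨0, by omega⟩⟩
  -- `r` is too small for `±1` steps alone: spend `r + 1` steps `+2`, each adding `4` to the phase
  exact ⟨(2 * n + m - 5 * r - 6) / 2, (2 * n - m - r - 2) / 2, r + 1, by omega,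
    Int.modEq_iff_add_fac.mpr ⟨0, by omega⟩, Int.modEq_iff_add_fac.mpr ⟨-1, by omega⟩⟩

theorem exists_step_counts (hm : m < n) (r : ℤ) (hr : Even n → r ≡ m [ZMOD 2]) :
    ∃ j l c : ℕ, j + l + c ≤ 2 * n - 1 ∧ (j - l + 2 * c : ℤ) ≡ m [ZMOD n] ∧
      (j + l + 4 * c : ℤ) ≡ r [ZMOD nPrime n] := by
  have hpos : (0 : ℤ) < nPrime n := by
    unfold nPrime; split_ifs <;> omega
  obtain ⟨r', hr'⟩ : ∃ r' : ℕ, (r' : ℤ) = r % nPrime n :=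
    ⟨_, Int.toNat_of_nonneg (Int.emod_nonneg _ hpos.ne')⟩
  have hrr' : (r' : ℤ) ≡ r [ZMOD nPrime n] := hr' ▸ Int.mod_modEq r _
  have hr'lt : (r' : ℤ) < nPrime n := hr' ▸ Int.emod_lt_of_pos r hpos
  rcases Nat.even_or_odd n with hn | hn
  · rw [nPrime_of_even hn] at hrr' hr'lt
    have hpar : r' % 2 = m % 2 := by
      exact_mod_cast (hrr'.of_dvd (Dvd.intro n rfl)).trans (hr hn)
    obtain ⟨j, l, c, hlen, hdisp, hphase⟩ :=
      exists_step_counts_of_even hn hm (r := r') (by omega) hpar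
    rw [nPrime_of_even hn]
    exact ⟨j, l, c, hlen, hdisp, by exact_mod_cast hphase.trans hrr'⟩
  · rw [nPrime_of_odd hn] at hrr' hr'lt
    obtain ⟨j, l, hlen, hdisp, hphase⟩ := exists_step_counts_of_odd hn hm (r := r') (by omega)
    rw [nPrime_of_odd hn]
    exact ⟨j, l, 0, by omega, by simpa using hdisp, by simpa using hphase.trans hrr'⟩

end StepCounts

theorem exists_extension_reaching {n : ℕ} [NeZero n] (γ : ℕ → ZMod n) (s : ℕ) (f : ZMod n)
    (r : ℤ) (hr : Even n → r ≡ (γ s).val + f.val [ZMOD 2]) :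
    ∃ γ' : ℕ → ZMod n, Set.EqOn γ' γ (Set.Iic s) ∧ γ' (s + (2 * n - 1)) = f ∧
      phaseUpTo γ' (s + (2 * n - 1)) ≡ phaseUpTo γ s + r [ZMOD nPrime n] := by
  have hdisp : ((γ s).val : ℤ) - f.val ≡ (γ s - f).val [ZMOD n] := by
    rw [← ZMod.intCast_eq_intCast_iff]
    simp
  have hpar : Even n → r ≡ (γ s - f).val [ZMOD 2] := fun hn =>
    (hr hn).trans ((Int.modEq_iff_add_fac.mpr ⟨-f.val, by ring⟩).trans
      (hdisp.of_dvd (Int.natCast_dvd_natCast.mpr (even_iff_two_dvd.mp hn))))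
  obtain ⟨j, l, c, hlen, hsum, hsq⟩ := exists_step_counts (ZMod.val_lt (γ s - f)) r hpar
  set zs : List ℤ := List.replicate j 1 ++ List.replicate l (-1) ++ List.replicate c 2 ++
    List.replicate (2 * n - 1 - (j + l + c)) 0
  have hlen' : zs.length = 2 * n - 1 := by simp [zs]; omega
  have hsum' : zs.sum = (j - l + 2 * c : ℤ) := by simp [zs]; ring
  have hsq' : (zs.map (· ^ 2)).sum = (j + l + 4 * c : ℤ) := by simp [zs]; ring
  obtain ⟨γ', hagree, hend, hphase⟩ := exists_extension_steps zs γ s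
  rw [hlen', hsq'] at hphase
  rw [hlen'] at hend
  refine ⟨γ', hagree, ?_, hphase.trans (hsq.add_left _)⟩
  rw [hend, hsum', (ZMod.intCast_eq_intCast_iff _ _ n).mpr hsum]
  simp

theorem exists_path_extending {n t₀ K : ℕ} [NeZero n] (δ : Fin (t₀ + 1) → ZMod n)
    (c : Fin K → ZMod n) (f : ZMod n) (p : ℤ)
    (hp : Even n → p ≡ (δ 0).val + f.val [ZMOD 2]) :
    ∃ γ : Fin (t₀ + K + (2 * n - 1) + 1) → ZMod n, restrictPath n (by omega) γ = δ ∧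
      (∀ k : Fin K, γ (Fin.castLE (by omega) (Fin.natAdd (t₀ + 1) k)) = c k) ∧
      γ (Fin.last _) = f ∧ phaseSum n _ γ ≡ p [ZMOD nPrime n] := by
  set α : ℕ → ZMod n := fun k => if h : k < t₀ + 1 + K then Fin.append δ c ⟨k, h⟩ else 0
  have hαδ (k : Fin (t₀ + 1)) : α k = δ k := by
    simp only [α, dif_pos (by omega : (k : ℕ) < t₀ + 1 + K)]
    exact Fin.append_left δ c k
  have hαc (k : Fin K) : α (t₀ + 1 + k) = c k := by
    simp only [α, dif_pos (by omega : t₀ + 1 + k < t₀ + 1 + K)]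
    exact Fin.append_right δ c k
  have hpar : Even n → p - phaseUpTo α (t₀ + K) ≡ (α (t₀ + K)).val + f.val [ZMOD 2] := by
    intro hn
    have h := (hp hn).sub (phaseUpTo_modEq_two α (t₀ + K))
    rw [← hαδ 0, Fin.val_zero] at h
    exact h.trans (Int.modEq_iff_add_fac.mpr ⟨(α (t₀ + K)).val, by ring⟩)
  obtain ⟨γ, hagree, hend, hphase⟩ := exists_extension_reaching α (t₀ + K) f _ hpar
  refine ⟨fun j => γ j, funext fun k => ?_, fun k => ?_, hend, ?_⟩
  · show γ k = δ k
    rw [← hαδ]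
    exact hagree (Set.mem_Iic.mpr (by omega))
  · show γ (t₀ + 1 + k) = c k
    rw [hagree (Set.mem_Iic.mpr (by omega)), hαc]
  · rw [phaseSum_eq_phaseUpTo]
    simpa using hphase

section Znif

variable {n : ℕ} [NeZero n] {i f : ZMod n} {p : ℕ}

theorem lt_nPrime_of_mem_Znif (hp : p ∈ Znif n i f) : p < nPrime n := by
  unfold Znif nPrime at *
  split_ifs at * with hn
  · exact hp.1
  · exact hp

theorem modEq_two_of_mem_Znif (hp : p ∈ Znif n i f) (hn : Even n) :
    (p : ℤ) ≡ i.val + f.val [ZMOD 2] := by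
  rw [Znif, if_pos hn] at hp
  exact_mod_cast hp.2

end Znif

theorem restrictPath_zero {n t₀ t : ℕ} (h : t₀ ≤ t) (γ : Fin (t + 1) → ZMod n) :
    restrictPath n h γ 0 = γ 0 :=
  rfl

theorem ncard_mul_pow_le_sCount {n t₀ : ℕ} [NeZero n] (E : Set (Fin (t₀ + 1) → ZMod n))
    {i f : ZMod n} {p : ℕ} (hp : p ∈ Znif n i f) (K : ℕ) :
    {δ | δ ∈ E ∧ δ 0 = i}.ncard * n ^ K ≤
      sCount n (t₀ + K + (2 * n - 1)) (by omega) E i f p := by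
  set S := {δ | δ ∈ E ∧ δ 0 = i}
  set T := {γ : Fin (t₀ + K + (2 * n - 1) + 1) → ZMod n | restrictPath n (by omega) γ ∈ E ∧
    γ 0 = i ∧ γ (Fin.last _) = f ∧ phaseSum n _ γ % (nPrime n : ℤ) = (p : ℤ)}
  let Φ : T → S × (Fin K → ZMod n) := fun γ =>
    (⟨restrictPath n (by omega : t₀ ≤ t₀ + K + (2 * n - 1)) γ, γ.2.1,
        (restrictPath_zero _ _).trans γ.2.2.1⟩,
      fun k => γ.1 (Fin.castLE (by omega) (Fin.natAdd (t₀ + 1) k)))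
  have hΦ : Function.Surjective Φ := by
    rintro ⟨⟨δ, hδE, hδi⟩, c⟩
    obtain ⟨γ, hres, hmid, hend, hphase⟩ :=
      exists_path_extending δ c f p (hδi ▸ modEq_two_of_mem_Znif hp)
    refine ⟨⟨γ, hres ▸ hδE, (congrFun hres 0).trans hδi, hend, ?_⟩,
      Prod.ext (Subtype.ext hres) (funext hmid)⟩
    rw [hphase]
    exact Int.emod_eq_of_lt (by positivity) (by exact_mod_cast lt_nPrime_of_mem_Znif hp)
  calc S.ncard * n ^ K = Nat.card (S × (Fin K → ZMod n)) := by
        rw [Nat.card_prod, Nat.card_coe_set_eq, Nat.card_fun, Nat.card_zmod, Nat.card_fin]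
    _ ≤ Nat.card T := Nat.card_le_card_of_surjective Φ hΦ

/-- For `t ≥ t₀ + 2n - 1`, `i, f ∈ ℤ_n` and `p ∈ ℤ_{n,i,f}`,
`s^t_{ifp}(E) ≥ c_i(E) · n^(t - t₀ - 2n + 1)`, where `c_i(E)` is the number of
`t₀`-paths in `E` starting at `i`. -/
theorem stmt4 (n : ℕ) [NeZero n] (hn : 1 < n) (t₀ : ℕ)
    (E : Set (Fin (t₀ + 1) → ZMod n)) (t : ℕ) (ht : t₀ + 2 * n - 1 ≤ t)
    (i f : ZMod n) (p : ℕ) (hp : p ∈ Znif n i f) :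
    Set.ncard {γ : Fin (t₀ + 1) → ZMod n | γ ∈ E ∧ γ 0 = i} *
        n ^ (t - (t₀ + 2 * n - 1)) ≤
      sCount n t (by omega) E i f p := by
  obtain ⟨K, rfl⟩ : ∃ K, t = t₀ + K + (2 * n - 1) := ⟨t - (t₀ + 2 * n - 1), by omega⟩
  rw [show t₀ + K + (2 * n - 1) - (t₀ + 2 * n - 1) = K by omega]
  exact ncard_mul_pow_le_sCount E hp K
end

section
/- Fix an odd integer n > 1, arbitrary initial amplitudes ψ : ℤ_n → ℂ, and a set E of t₀-paths (a time-finite event with defining data (t₀, E)). Let t ≥ t₀. If for each pair i, f ∈ ℤ_n the counts s^t_{ifp}(E) are equal for all p ∈ ℤ_n (i.e. independent of p), then E is null: μ_t(E) = 0. -/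
open scoped Classical

/-! For odd `n`, `ω_n` is a primitive `n`-th root of unity and every amplitude factors as
`a[γ] = ψ_{γ(0)} ω_n^{p(γ)} / √n^t`. Grouping the paths of `E_t` that end at `f` by their
starting point `i`, the `i`-th group contributes `ψ_i / √n^t · Σ_p s^t_{ifp}(E) ω_n^p`, which
vanishes when the counts do not depend on `p`, since the `n`-th roots of unity sum to zero. -/

open Finset

theorem IsPrimitiveRoot.sum_pow_eq_zero_of_card_filter_mod_eq {ι R : Type*} [CommRing R]
    [IsDomain R] {ζ : R} {n : ℕ} (hζ : IsPrimitiveRoot ζ n) (hn : 1 < n) (s : Finset ι)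
    (φ : ι → ℕ) (hφ : ∀ p < n, ∀ q < n, #{x ∈ s | φ x % n = p} = #{x ∈ s | φ x % n = q}) :
    ∑ x ∈ s, ζ ^ φ x = 0 := by
  have hmod : ∀ x, ζ ^ φ x = ζ ^ (φ x % n) := fun x => by
    rw [hζ.eq_orderOf, pow_mod_orderOf]
  calc ∑ x ∈ s, ζ ^ φ x
      = ∑ p ∈ range n, ∑ x ∈ s with φ x % n = p, ζ ^ p := by
        simp_rw [hmod]
        exact (sum_fiberwise_of_maps_to' (fun x _ => mem_range.2 (Nat.mod_lt _ (by omega))) _).symm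
    _ = ∑ p ∈ range n, (#{x ∈ s | φ x % n = 0} : R) * ζ ^ p := by
        refine sum_congr rfl fun p hp => ?_
        rw [sum_const, nsmul_eq_mul, hφ p (mem_range.1 hp) 0 (by omega)]
    _ = 0 := by rw [← mul_sum, hζ.geom_sum_eq_zero hn, mul_zero]

theorem omegaN_isPrimitiveRoot {n : ℕ} (hodd : Odd n) : IsPrimitiveRoot (omegaN n) n := by
  have : omegaN n = Complex.exp (2 * Real.pi * Complex.I / n) := by
    rw [omegaN, if_neg (Nat.not_even_iff_odd.mpr hodd), efn]
    push_cast
    ring_nf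
  rw [this]
  exact Complex.isPrimitiveRoot_exp n hodd.pos.ne'

theorem nPrime_eq_of_odd {n : ℕ} (hodd : Odd n) : nPrime n = n := by
  rw [nPrime, if_neg (Nat.not_even_iff_odd.mpr hodd)]

def phaseNat (n t : ℕ) (γ : Fin (t + 1) → ZMod n) : ℕ :=
  ∑ k : Fin t, (((γ k.castSucc).val : ℤ) - ((γ k.succ).val : ℤ)).natAbs ^ 2

section Paths

variable (n : ℕ) [NeZero n] (t : ℕ)

theorem natCast_phaseNat (γ : Fin (t + 1) → ZMod n) : (phaseNat n t γ : ℤ) = phaseSum n t γ := by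
  simp only [phaseNat, phaseSum, Nat.cast_sum, Nat.cast_pow, Int.natCast_natAbs, sq_abs]

theorem amp_eq_mul_omegaN_pow_phaseNat (ψ : ZMod n → ℂ) (γ : Fin (t + 1) → ZMod n) :
    amp n ψ t γ = ψ (γ 0) / (Real.sqrt n : ℂ) ^ t * omegaN n ^ phaseNat n t γ := by
  simp only [amp, hopperU]
  rw [prod_div_distrib, prod_pow_eq_pow_sum, prod_const, card_univ, Fintype.card_fin, phaseNat]
  ring

variable {t₀ : ℕ} (h : t₀ ≤ t) (E : Set (Fin (t₀ + 1) → ZMod n))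

noncomputable def pathsFromTo (i f : ZMod n) : Finset (Fin (t + 1) → ZMod n) :=
  {γ | restrictPath n h γ ∈ E ∧ γ 0 = i ∧ γ (Fin.last t) = f}

theorem sCount_eq_card_filter_phaseNat (hodd : Odd n) (i f : ZMod n) (p : ℕ) :
    sCount n t h E i f p = #{γ ∈ pathsFromTo n t h E i f | phaseNat n t γ % n = p} := by
  rw [sCount, ← Set.ncard_coe_finset]
  congr 1
  ext γ
  simp only [pathsFromTo, coe_filter, mem_filter, mem_univ, true_and, Set.mem_ofPred_eq,
    ← natCast_phaseNat, nPrime_eq_of_odd hodd, ← Int.natCast_mod, Nat.cast_inj, and_assoc]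

end Paths

section Measure

variable {n : ℕ} [NeZero n] {t t₀ : ℕ} (h : t₀ ≤ t) (E : Set (Fin (t₀ + 1) → ZMod n))

theorem sum_amp_pathsFromTo (ψ : ZMod n → ℂ) (i f : ZMod n) :
    ∑ γ ∈ pathsFromTo n t h E i f, amp n ψ t γ
      = ψ i / (Real.sqrt n : ℂ) ^ t *
          ∑ γ ∈ pathsFromTo n t h E i f, omegaN n ^ phaseNat n t γ := by
  rw [mul_sum]
  refine sum_congr rfl fun γ hγ => ?_
  simp only [pathsFromTo, mem_filter] at hγ
  rw [amp_eq_mul_omegaN_pow_phaseNat, hγ.2.2.1]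

theorem sum_ite_amp_eq_sum_pathsFromTo (ψ : ZMod n → ℂ) (f : ZMod n) :
    ∑ γ : Fin (t + 1) → ZMod n,
        (if γ ∈ {γ | restrictPath n h γ ∈ E} ∧ γ (Fin.last t) = f then amp n ψ t γ else 0)
      = ∑ i, ∑ γ ∈ pathsFromTo n t h E i f, amp n ψ t γ := by
  rw [← sum_filter, ← sum_fiberwise _ (fun γ => γ 0)]
  refine sum_congr rfl fun i _ => sum_congr ?_ fun _ _ => rfl
  ext γ
  simp only [pathsFromTo, mem_filter, mem_univ, true_and, Set.mem_ofPred_eq]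
  tauto

theorem sum_omegaN_pow_phaseNat_eq_zero (hn : 1 < n) (hodd : Odd n) (i f : ZMod n)
    (hs : ∀ p < n, ∀ q < n, sCount n t h E i f p = sCount n t h E i f q) :
    ∑ γ ∈ pathsFromTo n t h E i f, omegaN n ^ phaseNat n t γ = 0 := by
  refine (omegaN_isPrimitiveRoot hodd).sum_pow_eq_zero_of_card_filter_mod_eq hn _ _ ?_
  simpa only [sCount_eq_card_filter_phaseNat n t h E hodd] using hs

end Measure

/-- For odd `n` and any initial amplitudes: if for each `i, f` the
counts `s^t_{ifp}(E)` are equal for all `p ∈ ℤ_n`, then `E` is null: `μ_t(E) = 0`. -/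
theorem stmt13 (n : ℕ) [NeZero n] (hn : 1 < n) (hodd : Odd n) (ψ : ZMod n → ℂ)
    {t₀ : ℕ} (E : Set (Fin (t₀ + 1) → ZMod n)) (t : ℕ) (h : t₀ ≤ t)
    (hs : ∀ i f : ZMod n, ∀ p < n, ∀ q < n,
      sCount n t h E i f p = sCount n t h E i f q) :
    mu n ψ t {γ : Fin (t + 1) → ZMod n | restrictPath n h γ ∈ E} = 0 := by
  refine sum_eq_zero fun f _ => ?_
  rw [sum_ite_amp_eq_sum_pathsFromTo, sum_eq_zero fun i _ => by
    rw [sum_amp_pathsFromTo, sum_omegaN_pow_phaseNat_eq_zero h E hn hodd i f (hs i f), mul_zero]]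
  rw [norm_zero, zero_pow two_ne_zero]
end

section
/- Fix an even integer n > 1, arbitrary initial amplitudes ψ : ℤ_n → ℂ, and a set E of t₀-paths (a time-finite event with defining data (t₀, E)). Let t ≥ t₀. If s^t_{ifp}(E) = s^t_{if(p+n)}(E) for all i, f ∈ ℤ_n and all p ∈ ℤ_{2n} (where p + n is taken mod 2n), then E is null: μ_t(E) = 0. -/
open scoped Classical

/-!
The amplitude of a `t`-path is `ψ(γ 0) ω^{p(γ)} / √n^t`, so grouping the paths of `E_t` that
end at `f` by their starting point `i` and phase class `p` writes the total amplitude at `f` as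
`Σ_i ψ_i / √n^t · Σ_{p < 2n} s^t_{ifp}(E) ω^p`. For even `n`, `ω^n = -1`, so the terms `p`
and `p + n` of the inner sum cancel by the hypothesis on the counts.
-/

open Finset

def natPhase (n : ℕ) (t : ℕ) (γ : Fin (t + 1) → ZMod n) : ℕ :=
  ∑ k : Fin t, (((γ k.castSucc).val : ℤ) - ((γ k.succ).val : ℤ)).natAbs ^ 2

section Paths

variable {n : ℕ} [NeZero n] {t : ℕ}

lemma natCast_natPhase (γ : Fin (t + 1) → ZMod n) :
    (natPhase n t γ : ℤ) = phaseSum n t γ := by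
  unfold natPhase phaseSum
  push_cast
  exact sum_congr rfl fun k _ => sq_abs _

lemma amp_eq_mul_omegaN_pow_natPhase (ψ : ZMod n → ℂ) (γ : Fin (t + 1) → ZMod n) :
    amp n ψ t γ = ψ (γ 0) * omegaN n ^ natPhase n t γ / (Real.sqrt n : ℂ) ^ t := by
  unfold amp hopperU natPhase
  rw [prod_div_distrib, prod_pow_eq_pow_sum, prod_const, card_univ, Fintype.card_fin,
    mul_div_assoc]

lemma nPrime_pos : 0 < nPrime n := by
  have := NeZero.pos n
  unfold nPrime
  split_ifs <;> omega

lemma omegaN_pow_nPrime : omegaN n ^ nPrime n = 1 := by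
  have hn : (n : ℂ) ≠ 0 := Nat.cast_ne_zero.mpr (NeZero.ne n)
  unfold omegaN nPrime efn
  split_ifs
  all_goals
    rw [← Complex.exp_nat_mul, ← Complex.exp_two_pi_mul_I]
    push_cast
    field_simp

lemma omegaN_pow_self_of_even (hev : Even n) : omegaN n ^ n = -1 := by
  have hn : (n : ℂ) ≠ 0 := Nat.cast_ne_zero.mpr (NeZero.ne n)
  rw [omegaN, if_pos hev, efn, ← Complex.exp_nat_mul, ← Complex.exp_pi_mul_I]
  push_cast
  field_simp

variable {t₀ : ℕ} (h : t₀ ≤ t) (E : Set (Fin (t₀ + 1) → ZMod n))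

lemma sCount_eq_card (i f : ZMod n) (p : ℕ) :
    sCount n t h E i f p = #{γ | restrictPath n h γ ∈ E ∧ γ 0 = i ∧ γ (Fin.last t) = f ∧
      natPhase n t γ % nPrime n = p} := by
  rw [sCount, Set.ncard_eq_toFinset_card', Set.toFinset_ofPred]
  congr! 6
  rw [← natCast_natPhase, ← Int.natCast_mod, Nat.cast_inj]

lemma sum_amp_eq_sum_sCount (ψ : ZMod n → ℂ) (f : ZMod n) :
    ∑ γ, (if restrictPath n h γ ∈ E ∧ γ (Fin.last t) = f then amp n ψ t γ else 0) =
      ∑ i, ψ i / (Real.sqrt n : ℂ) ^ t *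
        ∑ p ∈ range (nPrime n), (sCount n t h E i f p : ℂ) * omegaN n ^ p := by
  have hkey : ∀ γ ∈ ({γ | restrictPath n h γ ∈ E ∧ γ (Fin.last t) = f} :
      Finset (Fin (t + 1) → ZMod n)),
      (γ 0, natPhase n t γ % nPrime n) ∈ (univ : Finset (ZMod n)) ×ˢ range (nPrime n) := by
    intro γ _
    simpa using Nat.mod_lt _ nPrime_pos
  rw [← sum_filter, ← sum_fiberwise_of_maps_to hkey, sum_product]
  refine sum_congr rfl fun i _ => ?_
  rw [mul_sum]
  refine sum_congr rfl fun p _ => ?_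
  have hfiber : ∀ γ ∈ ({γ | (restrictPath n h γ ∈ E ∧ γ (Fin.last t) = f) ∧
      (γ 0, natPhase n t γ % nPrime n) = (i, p)} : Finset (Fin (t + 1) → ZMod n)),
      amp n ψ t γ = ψ i / (Real.sqrt n : ℂ) ^ t * omegaN n ^ p := by
    intro γ hγ
    simp only [mem_filter, mem_univ, true_and, Prod.mk.injEq] at hγ
    rw [amp_eq_mul_omegaN_pow_natPhase, pow_eq_pow_mod _ omegaN_pow_nPrime, hγ.2.1, hγ.2.2]
    ring
  rw [filter_filter, sum_congr rfl hfiber, sum_const, nsmul_eq_mul, sCount_eq_card, mul_left_comm]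
  congr 4
  ext γ
  simp only [mem_filter, mem_univ, true_and, Prod.mk.injEq]
  tauto

end Paths

lemma sum_range_two_mul_mul_pow_eq_zero {R : Type*} [CommRing R] {ω : R} {n : ℕ}
    (hω : ω ^ n = -1) (c : ℕ → R) (hc : ∀ p < n, c (n + p) = c p) :
    ∑ p ∈ range (2 * n), c p * ω ^ p = 0 := by
  rw [two_mul, sum_range_add, ← sum_add_distrib]
  refine sum_eq_zero fun p hp => ?_
  rw [hc p (mem_range.mp hp), pow_add, hω]
  ring

theorem stmt14_general (n : ℕ) [NeZero n] (hev : Even n) (ψ : ZMod n → ℂ)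
    {t₀ : ℕ} (E : Set (Fin (t₀ + 1) → ZMod n)) (t : ℕ) (h : t₀ ≤ t)
    (hs : ∀ i f : ZMod n, ∀ p < 2 * n,
      sCount n t h E i f p = sCount n t h E i f ((p + n) % (2 * n))) :
    mu n ψ t {γ : Fin (t + 1) → ZMod n | restrictPath n h γ ∈ E} = 0 := by
  refine sum_eq_zero fun f _ => ?_
  have hcancel :
      ∀ i, ∑ p ∈ range (nPrime n), (sCount n t h E i f p : ℂ) * omegaN n ^ p = 0 := by
    intro i
    rw [nPrime, if_pos hev]
    refine sum_range_two_mul_mul_pow_eq_zero (omegaN_pow_self_of_even hev) _ fun p hp => ?_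
    rw [hs i f p (by omega), Nat.mod_eq_of_lt (by omega), add_comm]
  simp only [Set.mem_ofPred_eq, sum_amp_eq_sum_sCount, hcancel, mul_zero, sum_const_zero,
    norm_zero, zero_pow two_ne_zero]

/-- For even `n` and any initial amplitudes: if
`s^t_{ifp}(E) = s^t_{if(p+n)}(E)` for all `i, f ∈ ℤ_n` and all `p ∈ ℤ_{2n}`
(with `p + n` taken mod `2n`), then `E` is null: `μ_t(E) = 0`. -/
theorem stmt14 (n : ℕ) [NeZero n] (hn : 1 < n) (hev : Even n) (ψ : ZMod n → ℂ)
    {t₀ : ℕ} (E : Set (Fin (t₀ + 1) → ZMod n)) (t : ℕ) (h : t₀ ≤ t)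
    (hs : ∀ i f : ZMod n, ∀ p < 2 * n,
      sCount n t h E i f p = sCount n t h E i f ((p + n) % (2 * n))) :
    mu n ψ t {γ : Fin (t + 1) → ZMod n | restrictPath n h γ ∈ E} = 0 :=
  stmt14_general n hev ψ E t h hs
end
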